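/- For even n ≥ 6, the center C_n = {(z1,…,z_{n-1}) : p_{n-2} = 0, p_{n-1} + 1 = 0} is isomorphic to X_{n-2}: writing p_{n-1} + 1 = p_{n-3} + 1 + z_{n-1}(p_{n-2} + 2), on {p_{n-2} = 0} the equation p_{n-1} + 1 = 0 becomes p_{n-3} + 1 + 2z_{n-1} = 0, so z_{n-1} = −(p_{n-3}+1)/2 is uniquely determined, giving a bijective polynomial section X_{n-2} → C_n. -/
import Mathlib


noncomputable section
open Matrix

def Lm (z : ℂ) : Matrix (Fin 2) (Fin 2) ℂ := !![1, 0; z, 1]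
def Um (z : ℂ) : Matrix (Fin 2) (Fin 2) ℂ := !![1, z; 0, 1]

def Mmat : ℕ → (ℕ → ℂ) → Matrix (Fin 2) (Fin 2) ℂ
  | 0, _ => 1
  | 1, _ => 1
  | 2, _ => 1
  | 3, z => Lm (z 1) * Um (z 2) * Lm (z 3)
  | (n+4), z => Mmat (n+3) z * (if (n+4) % 2 = 1 then Lm (z (n+4)) else Um (z (n+4)))

def pol : ℕ → (ℕ → ℂ) → ℂ
  | 0, _ => 0
  | 1, _ => 0
  | 2, _ => 0
  | 3, z => z 1 + z 3 + z 1 * z 3 * z 2 - 1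
  | 4, z => z 1 * z 2 - 1 + z 4 * (z 1 + z 3 + z 1 * z 3 * z 2)
  | (n+5), z => pol (n+3) z + z (n+5) * (pol (n+4) z + if (n+5) % 2 = 1 then 2 else 1)

def ext (n : ℕ) (z : Fin n → ℂ) : ℕ → ℂ :=
  fun i => if h : 1 ≤ i ∧ i ≤ n then z ⟨i - 1, by omega⟩ else 0

def P (n : ℕ) (z : Fin n → ℂ) : ℂ := pol n (ext n z)

def Xset (n : ℕ) : Set (Fin n → ℂ) := {z | P n z = 0}

def X0set (n : ℕ) : Set (Fin n → ℂ) :=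
  {z | P n z + (if n % 2 = 1 then 2 else 1) = 0}

lemma pol_congr : ∀ (n : ℕ) (z z' : ℕ → ℂ),
    (∀ i, 1 ≤ i → i ≤ n → z i = z' i) → pol n z = pol n z' := by
  intro n
  induction n using Nat.strong_induction_on with
  | _ n ih =>
    match n with
    | 0 | 1 | 2 => intro z z' h; simp [pol]
    | 3 =>
      intro z z' h
      simp only [pol, h 1 (by omega) (by omega), h 2 (by omega) (by omega),
        h 3 (by omega) (by omega)]
    | 4 =>
      intro z z' h
      simp only [pol, h 1 (by omega) (by omega), h 2 (by omega) (by omega),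
        h 3 (by omega) (by omega), h 4 (by omega) (by omega)]
    | (n+5) =>
      intro z z' h
      simp only [pol]
      rw [ih (n+3) (by omega) z z' (fun i h1 h2 => h i h1 (by omega)),
        ih (n+4) (by omega) z z' (fun i h1 h2 => h i h1 (by omega)),
        h (n+5) (by omega) (by omega)]

lemma P_restr {m M : ℕ} (h : m ≤ M) (w : Fin M → ℂ) :
    P m (fun i => w (Fin.castLE h i)) = pol m (ext M w) := by
  unfold P
  apply pol_congr
  intro i h1 h2
  simp only [_root_.ext]
  rw [dif_pos ⟨h1, h2⟩, dif_pos ⟨h1, le_trans h2 h⟩]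
  rfl

lemma key (k : ℕ) (w : Fin (2 * k + 5) → ℂ) :
    P (2 * k + 5) w = pol (2 * k + 3) (ext (2 * k + 5) w) +
      w (Fin.last (2 * k + 4)) * (pol (2 * k + 4) (ext (2 * k + 5) w) + 2) := by
  unfold P
  show pol (2 * k + 3) _ + _root_.ext (2*k+5) w (2*k+5) * (pol (2 * k + 4) _ + if (2 * k + 5) % 2 = 1 then 2 else 1) = _
  have hmod : (2 * k + 5) % 2 = 1 := by omega
  rw [if_pos hmod]
  congr 2
  simp only [_root_.ext]
  rw [dif_pos ⟨by omega, by omega⟩]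
  congr 1

theorem stmt19 (k : ℕ) :
    ∃ e : {v : Fin (2 * k + 4) → ℂ // P (2 * k + 4) v = 0} ≃
        {w : Fin (2 * k + 5) → ℂ //
          P (2 * k + 4) (fun i => w (Fin.castLE (by omega) i)) = 0 ∧
          P (2 * k + 5) w + 1 = 0},
      (∀ (v : {v : Fin (2 * k + 4) → ℂ // P (2 * k + 4) v = 0}) (i : Fin (2 * k + 4)),
        (e v).val (Fin.castLE (by omega) i) = v.val i) ∧
      (∀ v : {v : Fin (2 * k + 4) → ℂ // P (2 * k + 4) v = 0},
        (e v).val (Fin.last (2 * k + 4)) =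
          -(P (2 * k + 3) (fun i => v.val (Fin.castLE (by omega) i)) + 1) / 2) := by
  have snoc_restr : ∀ (v : Fin (2 * k + 4) → ℂ) (c : ℂ),
      (fun i : Fin (2 * k + 4) => (Fin.snoc v c : Fin (2*k+5) → ℂ)
        (Fin.castLE (by omega : 2*k+4 ≤ 2*k+5) i)) = v := by
    intro v c
    funext i
    exact @Fin.snoc_castSucc (2*k+4) (fun _ => ℂ) c v i
  have restr_restr : ∀ (w : Fin (2 * k + 5) → ℂ),
      P (2 * k + 3) (fun i : Fin (2*k+3) =>
        (fun j : Fin (2*k+4) => w (Fin.castLE (by omega : 2*k+4 ≤ 2*k+5) j))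
          (Fin.castLE (by omega : 2*k+3 ≤ 2*k+4) i)) =
      pol (2 * k + 3) (ext (2 * k + 5) w) := by
    intro w
    have := P_restr (by omega : 2*k+3 ≤ 2*k+5) w
    rw [← this]
    rfl
  refine ⟨{
    toFun := fun v => ⟨Fin.snoc v.val
        (-(P (2 * k + 3) (fun i => v.val (Fin.castLE (by omega) i)) + 1) / 2), ?_, ?_⟩
    invFun := fun w => ⟨fun i => w.val (Fin.castLE (by omega) i), w.2.1⟩
    left_inv := ?_
    right_inv := ?_ }, ?_, ?_⟩
  · rw [snoc_restr]
    exact v.2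
  · set c := -(P (2 * k + 3) (fun i => v.val (Fin.castLE (by omega) i)) + 1) / 2 with hc
    set w : Fin (2 * k + 5) → ℂ := Fin.snoc v.val c with hw
    rw [key k w]
    have h4 : pol (2 * k + 4) (ext (2 * k + 5) w) = 0 := by
      rw [← P_restr (by omega : 2*k+4 ≤ 2*k+5) w, snoc_restr]
      exact v.2
    have h3 : pol (2 * k + 3) (ext (2 * k + 5) w) =
        P (2 * k + 3) (fun i => v.val (Fin.castLE (by omega) i)) := by
      rw [← restr_restr w]
      congr 1
      funext i
      exact congrFun (snoc_restr v.val c) (Fin.castLE (by omega) i)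
    have hlast : w (Fin.last (2 * k + 4)) = c := Fin.snoc_last _ _
    rw [h3, h4, hlast, hc]
    ring
  · intro v
    apply Subtype.ext
    exact snoc_restr v.val _
  · intro w
    apply Subtype.ext
    funext i
    induction i using Fin.lastCases with
    | last =>
      have hsl : (Fin.snoc (fun i : Fin (2*k+4) => w.val (Fin.castLE (by omega) i))
          (-(P (2 * k + 3) (fun i : Fin (2*k+3) =>
            (fun j : Fin (2*k+4) => w.val (Fin.castLE (by omega) j))
              (Fin.castLE (by omega) i)) + 1) / 2) : Fin (2*k+5) → ℂ)
          (Fin.last (2*k+4)) =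
          -(P (2 * k + 3) (fun i : Fin (2*k+3) =>
            (fun j : Fin (2*k+4) => w.val (Fin.castLE (by omega) j))
              (Fin.castLE (by omega) i)) + 1) / 2 := Fin.snoc_last _ _
      refine hsl.trans ?_
      rw [restr_restr w.val]
      have heq := w.2.2
      rw [key k w.val] at heq
      have h4 : pol (2 * k + 4) (ext (2 * k + 5) w.val) = 0 := by
        rw [← P_restr (by omega : 2*k+4 ≤ 2*k+5) w.val]; exact w.2.1
      rw [h4] at heq
      field_simp
      linear_combination -heq
    | cast i =>
      exact congrFun (snoc_restr (fun j : Fin (2*k+4) =>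
        w.val (Fin.castLE (by omega : 2*k+4 ≤ 2*k+5) j)) _) i
  · intro v i
    exact congrFun (snoc_restr v.val _) i
  · intro v
    simp only [Equiv.coe_fn_mk]
    exact Fin.snoc_last _ _
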